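/- Let (X, ↪, P) be a primal-proximity space. Then the operator cl* defined by cl*(A) := A ∪ A^↪, where A^↪ := {x ∈ X : {x} ↪ A}, is a Kuratowski closure operator: (1) cl*(∅) = ∅; (2) A ⊆ cl*(A) for every A ⊆ X; (3) cl*(A ∪ B) = cl*(A) ∪ cl*(B) for all A, B ⊆ X; (4) cl*(cl*(A)) = cl*(A) for every A ⊆ X. -/

import Mathlib

open Set

/-- A collection `P` of subsets of `X` is a *primal* on `X`. -/
def IsPrimalOn {X : Type*} (P : Set (Set X)) : Prop :=
  (Set.univ : Set X) ∉ P ∧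
  (∀ A B : Set X, A ∈ P → B ⊆ A → B ∈ P) ∧
  (∀ A B : Set X, A ∩ B ∈ P → A ∈ P ∨ B ∈ P)

/-- A binary relation `r` on the power set of `X` is a *primal-proximity* with
respect to a primal `P` on `X`. -/
def IsPrimalProximity {X : Type*} (P : Set (Set X)) (r : Set X → Set X → Prop) : Prop :=
  (∀ A B : Set X, r A B → r B A) ∧
  (∀ A B C : Set X, r A (B ∪ C) ↔ (r A B ∨ r A C)) ∧
  (∀ A : Set X, Aᶜ ∉ P → ∀ B : Set X, ¬ r A B) ∧
  (∀ A B : Set X, (A ∩ B)ᶜ ∈ P → r A B) ∧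
  (∀ A B : Set X, ¬ r A B →
    ∃ C D : Set X, ¬ r A Cᶜ ∧ ¬ r Dᶜ B ∧ (C ∩ D)ᶜ ∉ P)

/-- The point-primal proximity of `A`: `A^↪ = {x | {x} ↪ A}`. -/
def ppp {X : Type*} (r : Set X → Set X → Prop) (A : Set X) : Set X :=
  {x : X | r {x} A}

/- The heart of the matter is idempotence, `(A^↪)^↪ ⊆ A^↪`, and in fact `B ↪ A^↪` already forces
`B ↪ A`: if `B ̸↪ A`, axiom (5) gives `C, D` with `B ̸↪ Cᶜ`, `Dᶜ ̸↪ A` and `(C ∩ D)ᶜ ∉ P`. The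
second condition puts `A^↪` inside `D ⊆ (C ∩ D) ∪ Cᶜ`, and `B` is far from both pieces, by
axiom (3) and by the first condition. -/

namespace IsPrimalProximity

variable {X : Type*} {P : Set (Set X)} {r : Set X → Set X → Prop}

theorem symm (hr : IsPrimalProximity P r) {A B : Set X} (h : r A B) : r B A := hr.1 A B h

theorem rel_union_right_iff (hr : IsPrimalProximity P r) {A B C : Set X} :
    r A (B ∪ C) ↔ r A B ∨ r A C :=
  hr.2.1 A B C

theorem mono_right (hr : IsPrimalProximity P r) {A B B' : Set X} (hB : B ⊆ B') (h : r A B) :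
    r A B' := by
  rw [← union_eq_self_of_subset_left hB, hr.rel_union_right_iff]
  exact Or.inl h

theorem mono_left (hr : IsPrimalProximity P r) {A A' B : Set X} (hA : A ⊆ A') (h : r A B) :
    r A' B :=
  hr.symm (hr.mono_right hA (hr.symm h))

theorem not_rel_of_compl_notMem_right (hr : IsPrimalProximity P r) {A B : Set X}
    (hB : Bᶜ ∉ P) : ¬ r A B :=
  fun h => hr.2.2.1 B hB A (hr.symm h)

theorem not_rel_empty_right (hr : IsPrimalProximity P r) (hP : (univ : Set X) ∉ P)
    (A : Set X) : ¬ r A ∅ :=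
  hr.not_rel_of_compl_notMem_right (by rwa [compl_empty])

theorem ppp_empty (hr : IsPrimalProximity P r) (hP : (univ : Set X) ∉ P) :
    ppp r (∅ : Set X) = ∅ :=
  eq_empty_of_forall_notMem fun x => hr.not_rel_empty_right hP {x}

theorem ppp_union (hr : IsPrimalProximity P r) (A B : Set X) :
    ppp r (A ∪ B) = ppp r A ∪ ppp r B :=
  ext fun _ => hr.rel_union_right_iff

theorem ppp_subset_of_not_rel_compl (hr : IsPrimalProximity P r) {A D : Set X}
    (hD : ¬ r Dᶜ A) : ppp r A ⊆ D := by
  intro y hy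
  by_contra hyD
  exact hD (hr.mono_left (singleton_subset_iff.2 hyD) hy)

theorem rel_of_rel_ppp (hr : IsPrimalProximity P r) {A B : Set X} (h : r B (ppp r A)) :
    r B A := by
  by_contra hBA
  obtain ⟨C, D, hBC, hDA, hCD⟩ := hr.2.2.2.2 B A hBA
  have hD : D ⊆ (C ∩ D) ∪ Cᶜ := fun z hz => (em (z ∈ C)).imp (⟨·, hz⟩) id
  have hBD := hr.mono_right ((hr.ppp_subset_of_not_rel_compl hDA).trans hD) h
  rcases hr.rel_union_right_iff.1 hBD with hBCD | hBC'
  · exact hr.not_rel_of_compl_notMem_right hCD hBCD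
  · exact hBC hBC'

theorem ppp_ppp_subset (hr : IsPrimalProximity P r) (A : Set X) : ppp r (ppp r A) ⊆ ppp r A :=
  fun _ => hr.rel_of_rel_ppp

end IsPrimalProximity

theorem stmt_17_general {X : Type*} (P : Set (Set X)) (r : Set X → Set X → Prop)
    (hP : IsPrimalOn P) (hr : IsPrimalProximity P r) :
    ((∅ : Set X) ∪ ppp r (∅ : Set X) = ∅) ∧
    (∀ A : Set X, A ⊆ A ∪ ppp r A) ∧
    (∀ A B : Set X, (A ∪ B) ∪ ppp r (A ∪ B) = (A ∪ ppp r A) ∪ (B ∪ ppp r B)) ∧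
    (∀ A : Set X, (A ∪ ppp r A) ∪ ppp r (A ∪ ppp r A) = A ∪ ppp r A) := by
  refine ⟨by rw [hr.ppp_empty hP.1, union_empty], fun A => subset_union_left,
    fun A B => ?_, fun A => ?_⟩
  · rw [hr.ppp_union, union_union_union_comm]
  · rw [hr.ppp_union, union_assoc, ← union_assoc (ppp r A), union_self,
      union_eq_left.2 (hr.ppp_ppp_subset A)]

theorem stmt_17 {X : Type*} [Nonempty X] (P : Set (Set X)) (r : Set X → Set X → Prop)
    (hP : IsPrimalOn P) (hr : IsPrimalProximity P r) :
    ((∅ : Set X) ∪ ppp r (∅ : Set X) = ∅) ∧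
    (∀ A : Set X, A ⊆ A ∪ ppp r A) ∧
    (∀ A B : Set X, (A ∪ B) ∪ ppp r (A ∪ B) = (A ∪ ppp r A) ∪ (B ∪ ppp r B)) ∧
    (∀ A : Set X, (A ∪ ppp r A) ∪ ppp r (A ∪ ppp r A) = A ∪ ppp r A) :=
  stmt_17_general P r hP hr
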